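/- Let K > 0, γ ≥ 1, P(z) := K z^γ, and H(ζ, ξ) := ζ ∫_ξ^ζ (P(z) − P(ξ))/z² dz for ζ, ξ > 0. Let 0 < ρ_* < ρ^* < ∞. Then there exists a constant C > 0, depending only on ρ_*, ρ^*, γ, K, such that for all ζ, ξ with ρ_* ≤ ζ ≤ ρ^* and ρ_* ≤ ξ ≤ ρ^*, one has C^{−1} (ζ − ξ)² ≤ H(ζ, ξ) ≤ C (ζ − ξ)². -/

import Mathlib

/-!
By the mean value theorem `z^γ - ξ^γ = γ c^(γ-1) (z - ξ)` with `c` between `ξ` and `z`, so on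
`[ρ_*, ρ^*]` the integrand `(P(z) - P(ξ)) / z²` of `H` is `z - ξ` times a factor pinned between
two positive constants. Since `∫_ξ^ζ (z - ξ) dz = (ζ - ξ)² / 2` whatever the order of `ξ` and `ζ`,
and the prefactor `ζ` lies in `[ρ_*, ρ^*]`, `H(ζ, ξ)` is comparable to `(ζ - ξ)²`.
-/

open Set

/-- The isentropic pressure law `P(z) = K z^γ`. -/
noncomputable def Ppres (K γ : ℝ) (z : ℝ) : ℝ := K * z ^ γ

/-- The potential energy density `H(ζ, ξ) = ζ ∫_ξ^ζ (P(z) − P(ξ))/z² dz`. -/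
noncomputable def Hpot (K γ : ℝ) (ζ ξ : ℝ) : ℝ :=
  ζ * ∫ z in ξ..ζ, (Ppres K γ z - Ppres K γ ξ) / z ^ 2

open MeasureTheory

theorem rpow_sub_rpow_bounds_of_le {γ a b x y : ℝ} (hγ : 1 ≤ γ) (ha : 0 ≤ a)
    (hx : x ∈ Icc a b) (hy : y ∈ Icc a b) (hxy : x ≤ y) :
    γ * a ^ (γ - 1) * (y - x) ≤ y ^ γ - x ^ γ ∧ y ^ γ - x ^ γ ≤ γ * b ^ (γ - 1) * (y - x) := by
  have hcont : ContinuousOn (fun z : ℝ => z ^ γ) (Icc a b) :=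
    (Real.continuous_rpow_const (by linarith)).continuousOn
  have hdiff : DifferentiableOn ℝ (fun z : ℝ => z ^ γ) (interior (Icc a b)) :=
    (Real.differentiable_rpow_const hγ).differentiableOn
  constructor
  · refine (convex_Icc a b).mul_sub_le_image_sub_of_le_deriv hcont hdiff (fun z hz => ?_)
      x hx y hy hxy
    rw [interior_Icc] at hz
    rw [Real.deriv_rpow_const]
    gcongr
    exact hz.1.le
  · refine (convex_Icc a b).image_sub_le_mul_sub_of_deriv_le hcont hdiff (fun z hz => ?_)
      x hx y hy hxy
    rw [interior_Icc] at hz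
    rw [Real.deriv_rpow_const]
    gcongr
    exacts [ha.trans hz.1.le, hz.2.le]

theorem rpow_sub_rpow_mul_sub_bounds {γ a b x y : ℝ} (hγ : 1 ≤ γ) (ha : 0 ≤ a)
    (hx : x ∈ Icc a b) (hy : y ∈ Icc a b) :
    γ * a ^ (γ - 1) * (y - x) ^ 2 ≤ (y ^ γ - x ^ γ) * (y - x) ∧
      (y ^ γ - x ^ γ) * (y - x) ≤ γ * b ^ (γ - 1) * (y - x) ^ 2 := by
  wlog hxy : x ≤ y generalizing x y
  · have := this hy hx (le_of_not_ge hxy)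
    constructor <;> nlinarith [this]
  obtain ⟨hlow, hup⟩ := rpow_sub_rpow_bounds_of_le hγ ha hx hy hxy
  have hyx : 0 ≤ y - x := sub_nonneg.2 hxy
  constructor <;> nlinarith

/-- The hypothesis says `α (z - a) ≤ g z` to the right of `a` and the reverse to the left of `a`,
which is what the oriented integral from `a` needs in either case. -/
theorem integral_ge_of_mul_sub {g : ℝ → ℝ} {a b α : ℝ}
    (hg : IntervalIntegrable g volume a b)
    (h : ∀ z ∈ uIcc a b, α * (z - a) ^ 2 ≤ g z * (z - a)) :
    α * (b - a) ^ 2 / 2 ≤ ∫ z in a..b, g z := by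
  have hlin : ∀ u v : ℝ, ∫ z in u..v, α * (z - a) = α * ((v - a) ^ 2 - (u - a) ^ 2) / 2 := by
    intro u v
    simp only [intervalIntegral.integral_const_mul, intervalIntegral.intervalIntegrable_id,
      intervalIntegrable_const, intervalIntegral.integral_sub, integral_id,
      intervalIntegral.integral_const, smul_eq_mul]
    ring
  have hαint : ∀ u v : ℝ, IntervalIntegrable (fun z => α * (z - a)) volume u v :=
    fun u v => (by fun_prop : Continuous fun z => α * (z - a)).intervalIntegrable u v
  rcases le_total a b with hab | hba
  · have hmono := intervalIntegral.integral_mono_on_of_le_Ioo hab (hαint a b) hg fun z hz => by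
      have hz' := h z (Ioo_subset_Icc_self.trans Icc_subset_uIcc hz)
      have hza : 0 < z - a := sub_pos.2 hz.1
      nlinarith
    rw [hlin] at hmono
    linarith
  · have hmono := intervalIntegral.integral_mono_on_of_le_Ioo hba hg.symm (hαint b a) fun z hz => by
      have hz' := h z (Ioo_subset_Icc_self.trans Icc_subset_uIcc' hz)
      have hza : z - a < 0 := sub_neg.2 hz.2
      nlinarith
    rw [hlin, intervalIntegral.integral_symm] at hmono
    linarith

theorem integral_le_of_mul_sub {g : ℝ → ℝ} {a b β : ℝ}
    (hg : IntervalIntegrable g volume a b)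
    (h : ∀ z ∈ uIcc a b, g z * (z - a) ≤ β * (z - a) ^ 2) :
    ∫ z in a..b, g z ≤ β * (b - a) ^ 2 / 2 := by
  have := integral_ge_of_mul_sub hg.neg (α := -β) fun z hz => by
    have := h z hz
    simp only [Pi.neg_apply]
    linarith
  simp only [Pi.neg_apply, intervalIntegral.integral_neg] at this
  linarith

theorem Ppres_sub_div_sq_mul_sub_bounds {K γ a b z ξ : ℝ} (hK : 0 ≤ K) (hγ : 1 ≤ γ)
    (ha : 0 < a) (hz : z ∈ Icc a b) (hξ : ξ ∈ Icc a b) :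
    K * γ * a ^ (γ - 1) / b ^ 2 * (z - ξ) ^ 2 ≤ (Ppres K γ z - Ppres K γ ξ) / z ^ 2 * (z - ξ) ∧
      (Ppres K γ z - Ppres K γ ξ) / z ^ 2 * (z - ξ) ≤
        K * γ * b ^ (γ - 1) / a ^ 2 * (z - ξ) ^ 2 := by
  obtain ⟨hlow, hup⟩ := rpow_sub_rpow_mul_sub_bounds hγ ha.le hξ hz
  have hP : (Ppres K γ z - Ppres K γ ξ) / z ^ 2 * (z - ξ) =
      K * ((z ^ γ - ξ ^ γ) * (z - ξ)) / z ^ 2 := by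
    unfold Ppres; ring
  have hD : 0 ≤ K * ((z ^ γ - ξ ^ γ) * (z - ξ)) :=
    mul_nonneg hK (le_trans (by have := hz.1; positivity) hlow)
  have hz0 : 0 < z := ha.trans_le hz.1
  rw [hP]
  constructor
  · calc K * γ * a ^ (γ - 1) / b ^ 2 * (z - ξ) ^ 2
          = K * (γ * a ^ (γ - 1) * (z - ξ) ^ 2) / b ^ 2 := by ring
      _ ≤ K * ((z ^ γ - ξ ^ γ) * (z - ξ)) / b ^ 2 := by gcongr
      _ ≤ K * ((z ^ γ - ξ ^ γ) * (z - ξ)) / z ^ 2 := by gcongr; exact hz.2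
  · calc K * ((z ^ γ - ξ ^ γ) * (z - ξ)) / z ^ 2
          ≤ K * ((z ^ γ - ξ ^ γ) * (z - ξ)) / a ^ 2 := by gcongr; exact hz.1
      _ ≤ K * (γ * b ^ (γ - 1) * (z - ξ) ^ 2) / a ^ 2 := by gcongr
      _ = K * γ * b ^ (γ - 1) / a ^ 2 * (z - ξ) ^ 2 := by ring

theorem Hpot_bounds {K γ a b ζ ξ : ℝ} (hK : 0 ≤ K) (hγ : 1 ≤ γ) (ha : 0 < a)
    (hζ : ζ ∈ Icc a b) (hξ : ξ ∈ Icc a b) :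
    a * (K * γ * a ^ (γ - 1) / b ^ 2) / 2 * (ζ - ξ) ^ 2 ≤ Hpot K γ ζ ξ ∧
      Hpot K γ ζ ξ ≤ b * (K * γ * b ^ (γ - 1) / a ^ 2) / 2 * (ζ - ξ) ^ 2 := by
  have hsub : uIcc ξ ζ ⊆ Icc a b := uIcc_subset_Icc hξ hζ
  have hint :
      IntervalIntegrable (fun z => (Ppres K γ z - Ppres K γ ξ) / z ^ 2) volume ξ ζ := by
    refine ContinuousOn.intervalIntegrable fun z hz => ?_
    have hz0 : z ≠ 0 := (ha.trans_le (hsub hz).1).ne'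
    unfold Ppres
    have := Real.continuous_rpow_const (by linarith : (0 : ℝ) ≤ γ)
    fun_prop (disch := positivity)
  have hbounds z (hz : z ∈ uIcc ξ ζ) := Ppres_sub_div_sq_mul_sub_bounds hK hγ ha (hsub hz) hξ
  have hlow := integral_ge_of_mul_sub hint fun z hz => (hbounds z hz).1
  have hup := integral_le_of_mul_sub hint fun z hz => (hbounds z hz).2
  have hI : 0 ≤ ∫ z in ξ..ζ, (Ppres K γ z - Ppres K γ ξ) / z ^ 2 :=
    le_trans (by have := hζ.1; positivity) hlow
  unfold Hpot
  constructor
  · calc a * (K * γ * a ^ (γ - 1) / b ^ 2) / 2 * (ζ - ξ) ^ 2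
          = a * (K * γ * a ^ (γ - 1) / b ^ 2 * (ζ - ξ) ^ 2 / 2) := by ring
      _ ≤ ζ * ∫ z in ξ..ζ, (Ppres K γ z - Ppres K γ ξ) / z ^ 2 := by
        gcongr
        exacts [ha.le.trans hζ.1, hζ.1]
  · calc ζ * ∫ z in ξ..ζ, (Ppres K γ z - Ppres K γ ξ) / z ^ 2
          ≤ b * (K * γ * b ^ (γ - 1) / a ^ 2 * (ζ - ξ) ^ 2 / 2) :=
        mul_le_mul hζ.2 hup hI (ha.le.trans (hζ.1.trans hζ.2))
      _ = b * (K * γ * b ^ (γ - 1) / a ^ 2) / 2 * (ζ - ξ) ^ 2 := by ring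

/-- Proposition 3.1. On a compact density range `[ρ_*, ρ^*] ⊆ (0,∞)`,
the potential energy density is comparable to the squared difference:
`C⁻¹ (ζ−ξ)² ≤ H(ζ,ξ) ≤ C (ζ−ξ)²`, with `C` depending only on `ρ_*, ρ^*, γ, K`. -/
theorem stmt_5 (K γ ρlow ρhigh : ℝ) (hK : 0 < K) (hγ : 1 ≤ γ)
    (h0 : 0 < ρlow) (hlh : ρlow < ρhigh) :
    ∃ C > (0 : ℝ), ∀ ζ ξ : ℝ, ρlow ≤ ζ → ζ ≤ ρhigh → ρlow ≤ ξ → ξ ≤ ρhigh →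
      C⁻¹ * (ζ - ξ) ^ 2 ≤ Hpot K γ ζ ξ ∧ Hpot K γ ζ ξ ≤ C * (ζ - ξ) ^ 2 := by
  set c := ρlow * (K * γ * ρlow ^ (γ - 1) / ρhigh ^ 2) / 2
  set c' := ρhigh * (K * γ * ρhigh ^ (γ - 1) / ρlow ^ 2) / 2
  have hc : 0 < c := by
    have := h0.trans hlh
    positivity
  refine ⟨max c' c⁻¹, lt_max_of_lt_right (inv_pos.2 hc), fun ζ ξ hζ₁ hζ₂ hξ₁ hξ₂ => ?_⟩
  obtain ⟨hlow, hup⟩ := Hpot_bounds hK.le hγ h0 ⟨hζ₁, hζ₂⟩ ⟨hξ₁, hξ₂⟩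
  constructor
  · calc (max c' c⁻¹)⁻¹ * (ζ - ξ) ^ 2 ≤ c * (ζ - ξ) ^ 2 := by
          gcongr
          exact inv_le_of_inv_le₀ hc (le_max_right _ _)
      _ ≤ Hpot K γ ζ ξ := hlow
  · exact hup.trans (by gcongr; exact le_max_left _ _)
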